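/- Let σ²(h) = h^r with 0 < r ≤ 2, fix −∞ < a < b < ∞ with c = b − a, and let k ≥ 1 be an integer. Then as h ↓ 0: (i) if (2−r)k < 1, then ∫_a^b∫_a^b |φ_h(x−y)|^k dx dy ∼ [2 r^k |r−1|^k c^{(r−2)k+2} / (2^k ((r−2)k+1)((r−2)k+2))] · h^{2k}; (ii) if r = 1, then ∫_a^b∫_a^b |φ_h(x−y)|^k dx dy ∼ 2c · h^{k+1}/(k+1); (iii) if (2−r)k = 1 and k ≥ 2, then ∫_a^b∫_a^b |φ_h(x−y)|^k dx dy ∼ 2c · |r(r−1)/2|^k · h^{2k} · log(1/h); (iv) if (2−r)k > 1, then ∫_a^b∫_a^b |φ_h(x−y)|^k dx dy ∼ 2c · h^{rk+1} · ∫_0^∞ |φ_1(s)|^k ds, the last integral being finite. (In each case '∼' means the ratio of the two sides tends to 1 as h ↓ 0.) -/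

import Mathlib

open MeasureTheory Filter Topology

noncomputable section

/-- For `σ²(h) = h^r`, `φ_h(s) = (|s+h|^r + |s−h|^r − 2|s|^r)/2`. -/
def phiPow (r h s : ℝ) : ℝ := (|s + h| ^ r + |s - h| ^ r - 2 * |s| ^ r) / 2





lemma continuous_phiPow (r h : ℝ) (hr : 0 < r) : Continuous (phiPow r h) := by
  unfold phiPow
  have h1 : Continuous fun s : ℝ => |s + h| ^ r :=
    (continuous_abs.comp (continuous_id.add continuous_const)).rpow_const fun x => Or.inr hr.le
  have h2 : Continuous fun s : ℝ => |s - h| ^ r :=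
    (continuous_abs.comp (continuous_id.sub continuous_const)).rpow_const fun x => Or.inr hr.le
  have h3 : Continuous fun s : ℝ => |s| ^ r :=
    continuous_abs.rpow_const fun x => Or.inr hr.le
  have := ((h1.add h2).sub (h3.mul (continuous_const (y := (2:ℝ))))).div_const 2
  convert this using 2 with s
  simp only [Pi.add_apply, Pi.sub_apply, Pi.mul_apply]
  ring

lemma phiPow_neg (r h s : ℝ) : phiPow r h (-s) = phiPow r h s := by
  unfold phiPow
  rw [show -s + h = -(s - h) by ring, show -s - h = -(s + h) by ring, abs_neg, abs_neg, abs_neg]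
  ring

lemma phiPow_scale (r : ℝ) {h : ℝ} (hh : 0 < h) (t : ℝ) :
    phiPow r h (h * t) = h ^ r * phiPow r 1 t := by
  unfold phiPow
  rw [show h * t + h = h * (t + 1) by ring, show h * t - h = h * (t - 1) by ring,
    abs_mul, abs_mul, abs_mul, abs_of_pos hh,
    Real.mul_rpow hh.le (abs_nonneg _), Real.mul_rpow hh.le (abs_nonneg _),
    Real.mul_rpow hh.le (abs_nonneg _)]
  ring

/-- second-difference MVT representation -/
lemma phiPow_eq_deriv2 (r : ℝ) {h s : ℝ} (hh : 0 < h) (hs : h < s) :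
    ∃ ξ ∈ Set.Ioo (s - h) (s + h),
      phiPow r h s = h ^ 2 / 2 * (r * (r - 1) * ξ ^ (r - 2)) := by
  have hsh : 0 < s - h := by linarith
  set g : ℝ → ℝ := fun x => (x + h) ^ r - x ^ r with hg
  set g' : ℝ → ℝ := fun x => r * (x + h) ^ (r - 1) - r * x ^ (r - 1) with hg'
  have hderiv : ∀ x : ℝ, 0 < x → HasDerivAt g (g' x) x := by
    intro x hx
    have d1 : HasDerivAt (fun y : ℝ => (y + h) ^ r) (r * (x + h) ^ (r - 1)) x := by
      have := (Real.hasDerivAt_rpow_const (x := x + h) (p := r)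
        (Or.inl (by positivity))).comp x ((hasDerivAt_id x).add_const h)
      simpa [Function.comp_def] using this
    have d2 : HasDerivAt (fun y : ℝ => y ^ r) (r * x ^ (r - 1)) x :=
      Real.hasDerivAt_rpow_const (Or.inl hx.ne')
    exact d1.sub d2
  obtain ⟨ζ, hζ, hζeq⟩ := exists_hasDerivAt_eq_slope g g' (by linarith : s - h < s)
    (fun x hx => ((hderiv x (lt_of_lt_of_le hsh hx.1)).continuousAt).continuousWithinAt)
    (fun x hx => hderiv x (lt_trans hsh hx.1))
  have hζ0 : 0 < ζ := lt_trans hsh hζ.1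
  set f' : ℝ → ℝ := fun x => r * x ^ (r - 1) with hf'
  have hderiv2 : ∀ x : ℝ, 0 < x → HasDerivAt f' (r * ((r - 1) * x ^ (r - 2)) ) x := by
    intro x hx
    have := (Real.hasDerivAt_rpow_const (x := x) (p := r - 1) (Or.inl hx.ne')).const_mul r
    simpa [show r - 1 - 1 = r - 2 by ring] using this
  obtain ⟨ξ, hξ, hξeq⟩ := exists_hasDerivAt_eq_slope f' (fun x => r * ((r - 1) * x ^ (r - 2)))
    (by linarith : ζ < ζ + h)
    (fun x hx => ((hderiv2 x (lt_of_lt_of_le hζ0 hx.1)).continuousAt).continuousWithinAt)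
    (fun x hx => hderiv2 x (lt_trans hζ0 hx.1))
  refine ⟨ξ, ⟨lt_of_le_of_lt (le_of_lt hζ.1) hξ.1, by have := hξ.2; have := hζ.2; linarith⟩, ?_⟩
  -- hξeq : r * ((r-1) * ξ^(r-2)) = (f' (ζ+h) - f' ζ) / (ζ + h - ζ)
  -- hζeq : g' ζ = (g s - g (s-h)) / (s - (s-h))
  have e1 : g s - g (s - h) = h * g' ζ := by
    rw [hζeq, show s - (s - h) = h by ring]
    field_simp
  have e2 : g' ζ = h * (r * ((r - 1) * ξ ^ (r - 2))) := by
    rw [show (ζ + h - ζ) = h by ring] at hξeq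
    have : f' (ζ + h) - f' ζ = h * (r * ((r - 1) * ξ ^ (r - 2))) := by
      field_simp at hξeq; linarith [hξeq]
    simp only [hf', hg'] at this ⊢
    linarith [this]
  have e3 : g s - g (s - h) = (s + h) ^ r + (s - h) ^ r - 2 * s ^ r := by
    simp only [hg]; ring_nf
  have habs : phiPow r h s = ((s + h) ^ r + (s - h) ^ r - 2 * s ^ r) / 2 := by
    unfold phiPow
    rw [abs_of_pos (by linarith), abs_of_pos hsh, abs_of_pos (by linarith : (0:ℝ) < s)]
  rw [habs, ← e3, e1, e2]; ring

def Cr (r : ℝ) : ℝ := ((3:ℝ) ^ r + 1 + 2 * 2 ^ r) / 2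

lemma Cr_pos (r : ℝ) : 0 < Cr r := by
  have h1 : (0:ℝ) < 3 ^ r := Real.rpow_pos_of_pos (by norm_num) r
  have h2 : (0:ℝ) < 2 ^ r := Real.rpow_pos_of_pos (by norm_num) r
  unfold Cr; positivity

/-- crude bound near 0 -/
lemma phiPow_crude (r : ℝ) (hr : 0 < r) {h s : ℝ} (hh : 0 < h) (hs : 0 ≤ s) (hsh : s ≤ 2 * h) :
    |phiPow r h s| ≤ Cr r * h ^ r := by
  have b1 : |s + h| ^ r ≤ (3:ℝ) ^ r * h ^ r := by
    rw [← Real.mul_rpow (by norm_num) hh.le]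
    exact Real.rpow_le_rpow (abs_nonneg _) (by rw [abs_of_nonneg (by linarith)]; linarith) hr.le
  have b2 : |s - h| ^ r ≤ h ^ r := by
    refine Real.rpow_le_rpow (abs_nonneg _) ?_ hr.le
    rw [abs_le]; constructor <;> linarith
  have b3 : |s| ^ r ≤ (2:ℝ) ^ r * h ^ r := by
    rw [← Real.mul_rpow (by norm_num) hh.le]
    exact Real.rpow_le_rpow (abs_nonneg _) (by rw [abs_of_nonneg hs]; linarith) hr.le
  have habs : |phiPow r h s| ≤ (|s + h| ^ r + |s - h| ^ r + 2 * |s| ^ r) / 2 := by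
    unfold phiPow
    rw [abs_div, abs_of_nonneg (by norm_num : (0:ℝ) ≤ 2)]
    have h3 : (0:ℝ) ≤ |s| ^ r := Real.rpow_nonneg (abs_nonneg _) r
    have := abs_sub (|s + h| ^ r + |s - h| ^ r) (2 * |s| ^ r)
    have h4 : |(|s + h| ^ r + |s - h| ^ r)| = |s + h| ^ r + |s - h| ^ r := by
      rw [abs_of_nonneg]; positivity
    have h5 : |(2 * |s| ^ r)| = 2 * |s| ^ r := by rw [abs_of_nonneg]; positivity
    rw [h4, h5] at this
    linarith
  have : (|s + h| ^ r + |s - h| ^ r + 2 * |s| ^ r) / 2 ≤ Cr r * h ^ r := by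
    unfold Cr
    have h2 : (0:ℝ) < 2 ^ r := Real.rpow_pos_of_pos (by norm_num) r
    nlinarith [Real.rpow_pos_of_pos hh r]
  linarith

def Kc (r : ℝ) : ℝ := max (r * |r - 1| / 2) (Cr r)

lemma Kc_pos (r : ℝ) : 0 < Kc r := lt_of_lt_of_le (Cr_pos r) (le_max_right _ _)

lemma rpow_split_two (r h : ℝ) (hh : 0 < h) : h ^ r = h ^ (r - 2) * h ^ 2 := by
  rw [← Real.rpow_natCast h 2, ← Real.rpow_add hh]
  norm_num

/-- global bound: `|φ_h(s)| ≤ K h² (s/2)^(r−2)` for `0 < s`, `0 < h`. -/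
lemma phiPow_global (r : ℝ) (hr : 0 < r) (hr2 : r ≤ 2) {h s : ℝ} (hh : 0 < h) (hs : 0 < s) :
    |phiPow r h s| ≤ Kc r * h ^ 2 * (s / 2) ^ (r - 2) := by
  rcases le_or_gt s (2 * h) with hcase | hcase
  · have := phiPow_crude r hr hh hs.le hcase
    have hb : h ^ (r - 2) ≤ (s / 2) ^ (r - 2) :=
      Real.rpow_le_rpow_of_nonpos (by positivity) (by linarith) (by linarith)
    calc |phiPow r h s| ≤ Cr r * h ^ r := this
      _ = Cr r * h ^ (r - 2) * h ^ 2 := by rw [rpow_split_two r h hh]; ring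
      _ ≤ Cr r * (s / 2) ^ (r - 2) * h ^ 2 := by
          have := Cr_pos r
          gcongr
      _ = Cr r * h ^ 2 * (s / 2) ^ (r - 2) := by ring
      _ ≤ Kc r * h ^ 2 * (s / 2) ^ (r - 2) := by
          have h1 : Cr r ≤ Kc r := le_max_right _ _
          have h2 : (0:ℝ) ≤ (s / 2) ^ (r - 2) := (Real.rpow_pos_of_pos (by positivity) _).le
          gcongr
  · obtain ⟨ξ, hξ, heq⟩ := phiPow_eq_deriv2 r hh (by linarith : h < s)
    have hξ0 : 0 < ξ := lt_trans (by linarith [hξ.1] : (0:ℝ) < s - h) (lt_of_le_of_lt le_rfl (lt_of_lt_of_le hξ.1 le_rfl))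
    have hs2ξ : s / 2 ≤ ξ := by have := hξ.1; linarith
    have hξb : ξ ^ (r - 2) ≤ (s / 2) ^ (r - 2) :=
      Real.rpow_le_rpow_of_nonpos (by positivity) hs2ξ (by linarith)
    have hξpos : (0:ℝ) < ξ ^ (r - 2) := Real.rpow_pos_of_pos hξ0 _
    rw [heq, abs_mul, abs_of_nonneg (by positivity : (0:ℝ) ≤ h ^ 2 / 2), abs_mul,
      abs_of_nonneg hξpos.le, abs_mul, abs_of_nonneg hr.le]
    have h1 : r * |r - 1| / 2 ≤ Kc r := le_max_left _ _
    calc h ^ 2 / 2 * (r * |r - 1| * ξ ^ (r - 2))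
        ≤ h ^ 2 / 2 * (r * |r - 1| * (s / 2) ^ (r - 2)) := by
          have hra : (0:ℝ) ≤ r * |r - 1| := by positivity
          gcongr
      _ = (r * |r - 1| / 2) * h ^ 2 * (s / 2) ^ (r - 2) := by ring
      _ ≤ Kc r * h ^ 2 * (s / 2) ^ (r - 2) := by
          have h2 : (0:ℝ) ≤ (s / 2) ^ (r - 2) := (Real.rpow_pos_of_pos (by positivity) _).le
          gcongr
  
/-- pointwise limit of `φ_h(s)/h²` -/
lemma tendsto_phiPow_div (r : ℝ) (hr1 : 1 ≤ r) (hr2 : r ≤ 2) {s : ℝ} (hs : 0 < s) :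
    Tendsto (fun h : ℝ => phiPow r h s / h ^ 2) (𝓝[>] (0:ℝ))
      (𝓝 (r * (r - 1) / 2 * s ^ (r - 2))) := by
  have hcont : ∀ d : ℝ, Tendsto (fun h : ℝ => r * (r - 1) / 2 * (s + d * h) ^ (r - 2))
      (𝓝[>] (0:ℝ)) (𝓝 (r * (r - 1) / 2 * s ^ (r - 2))) := by
    intro d
    have h1 : ContinuousAt (fun x : ℝ => x ^ (r - 2)) s := Real.continuousAt_rpow_const s _ (Or.inl hs.ne')
    have h2 : Tendsto (fun h : ℝ => s + d * h) (𝓝[>] (0:ℝ)) (𝓝 s) := by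
      have : Tendsto (fun h : ℝ => s + d * h) (𝓝 (0:ℝ)) (𝓝 (s + d * 0)) :=
        (tendsto_const_nhds.add (tendsto_id.const_mul d))
      simpa using this.mono_left nhdsWithin_le_nhds
    exact (h1.tendsto.comp h2).const_mul _
  refine tendsto_of_tendsto_of_tendsto_of_le_of_le' (hcont 1) (hcont (-1)) ?_ ?_
  · filter_upwards [Ioo_mem_nhdsGT_of_mem (by constructor <;> [rfl; exact hs] : (0:ℝ) ∈ Set.Ico 0 s)] with h hh
    obtain ⟨hh1, hhs⟩ := hh
    obtain ⟨ξ, hξ, heq⟩ := phiPow_eq_deriv2 r hh1 hhs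
    obtain ⟨hξ1, hξ2⟩ := hξ
    have hξ0 : 0 < ξ := by linarith
    have hkey : (s + 1 * h) ^ (r - 2) ≤ ξ ^ (r - 2) :=
      Real.rpow_le_rpow_of_nonpos hξ0 (by linarith) (by linarith)
    have hrr : (0:ℝ) ≤ r * (r - 1) := by nlinarith
    have hh2 : (0:ℝ) < h ^ 2 := pow_pos hh1 2
    rw [heq, show h ^ 2 / 2 * (r * (r - 1) * ξ ^ (r - 2)) / h ^ 2
      = r * (r - 1) / 2 * ξ ^ (r - 2) by field_simp]
    exact mul_le_mul_of_nonneg_left hkey (by linarith)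
  · filter_upwards [Ioo_mem_nhdsGT_of_mem (by constructor <;> [rfl; exact hs] : (0:ℝ) ∈ Set.Ico 0 s)] with h hh
    obtain ⟨hh1, hhs⟩ := hh
    obtain ⟨ξ, hξ, heq⟩ := phiPow_eq_deriv2 r hh1 hhs
    obtain ⟨hξ1, hξ2⟩ := hξ
    have hξ0 : 0 < ξ := by linarith
    have hkey : ξ ^ (r - 2) ≤ (s + (-1) * h) ^ (r - 2) :=
      Real.rpow_le_rpow_of_nonpos (by linarith : (0:ℝ) < s + (-1)*h) (by linarith) (by linarith)
    have hrr : (0:ℝ) ≤ r * (r - 1) := by nlinarith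
    have hh2 : (0:ℝ) < h ^ 2 := pow_pos hh1 2
    rw [heq, show h ^ 2 / 2 * (r * (r - 1) * ξ ^ (r - 2)) / h ^ 2
      = r * (r - 1) / 2 * ξ ^ (r - 2) by field_simp]
    exact mul_le_mul_of_nonneg_left hkey (by linarith)

lemma double_integral_eq (F : ℝ → ℝ) (hF : Continuous F) (heven : ∀ s, F (-s) = F s)
    (a b : ℝ) :
    (∫ x in a..b, ∫ y in a..b, F (x - y)) = 2 * ∫ s in (0:ℝ)..(b - a), (b - a - s) * F s := by
  set Φ : ℝ → ℝ := fun t => ∫ u in (0:ℝ)..t, F u with hΦ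
  have hFi : ∀ u v : ℝ, IntervalIntegrable F volume u v := fun u v => hF.intervalIntegrable u v
  have hΦc : Continuous Φ := intervalIntegral.continuous_primitive hFi 0
  have hΦ0 : Φ 0 = 0 := intervalIntegral.integral_same
  have hΦodd : ∀ t, Φ (-t) = -Φ t := by
    intro t
    have h1 : Φ (-t) = -∫ u in (-t)..0, F u := by
      rw [hΦ]; exact intervalIntegral.integral_symm (-t) 0
    have h2 : (∫ u in (0:ℝ)..t, F (-u)) = ∫ u in (-t)..(0:ℝ), F u := by
      simpa using intervalIntegral.integral_comp_neg (a := 0) (b := t) F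
    have h3 : (∫ u in (0:ℝ)..t, F (-u)) = Φ t := by
      rw [hΦ]; exact intervalIntegral.integral_congr fun u _ => heven u
    rw [h1, ← h2, h3]
  -- inner integral
  have hinner : ∀ x : ℝ, (∫ y in a..b, F (x - y)) = Φ (x - a) - Φ (x - b) := by
    intro x
    rw [intervalIntegral.integral_comp_sub_left F x]
    rw [hΦ]
    exact (intervalIntegral.integral_interval_sub_left (hFi 0 (x - a)) (hFi 0 (x - b))).symm
  have houter : (∫ x in a..b, ∫ y in a..b, F (x - y))
      = (∫ x in a..b, Φ (x - a)) - ∫ x in a..b, Φ (x - b) := by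
    rw [intervalIntegral.integral_congr (g := fun x => Φ (x - a) - Φ (x - b))
      (fun x _ => hinner x)]
    exact intervalIntegral.integral_sub
      ((hΦc.comp (continuous_id.sub continuous_const)).intervalIntegrable a b)
      ((hΦc.comp (continuous_id.sub continuous_const)).intervalIntegrable a b)
  have e1 : (∫ x in a..b, Φ (x - a)) = ∫ u in (0:ℝ)..(b - a), Φ u := by
    simpa using intervalIntegral.integral_comp_sub_right Φ a
  have e2 : (∫ x in a..b, Φ (x - b)) = -∫ u in (0:ℝ)..(b - a), Φ u := by
    have h1 : (∫ x in a..b, Φ (x - b)) = ∫ u in (a - b)..(0:ℝ), Φ u := by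
      simpa using intervalIntegral.integral_comp_sub_right Φ b
    have h2 : (∫ u in (0:ℝ)..(b - a), Φ (-u)) = ∫ u in (a - b)..(0:ℝ), Φ u := by
      have := intervalIntegral.integral_comp_neg (a := (0:ℝ)) (b := b - a) Φ
      simpa [show -(b - a) = a - b by ring] using this
    have h3 : (∫ u in (0:ℝ)..(b - a), Φ (-u)) = -∫ u in (0:ℝ)..(b - a), Φ u := by
      rw [intervalIntegral.integral_congr (g := fun u => -Φ u) (fun u _ => hΦodd u)]
      exact intervalIntegral.integral_neg
    rw [h1, ← h2, h3]
  -- integration by parts:  ∫_0^c Φ = ∫_0^c (c-u) F u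
  have hibp : (∫ u in (0:ℝ)..(b - a), Φ u) = ∫ s in (0:ℝ)..(b - a), (b - a - s) * F s := by
    set c := b - a
    have hG : ∀ u ∈ Set.uIcc (0:ℝ) c, HasDerivAt (fun u => (u - c) * Φ u)
        (Φ u + (u - c) * F u) u := by
      intro u _
      have h1 : HasDerivAt (fun u : ℝ => u - c) 1 u := (hasDerivAt_id u).sub_const c
      have h2 : HasDerivAt Φ (F u) u := by
        rw [hΦ]
        exact intervalIntegral.integral_hasDerivAt_right (hFi 0 u)
          (hF.stronglyMeasurableAtFilter _ _) hF.continuousAt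
      have := h1.mul h2
      simpa [add_comm, mul_comm, Pi.mul_def] using this
    have hint : IntervalIntegrable (fun u => Φ u + (u - c) * F u) volume 0 c :=
      (hΦc.add ((continuous_id.sub continuous_const).mul hF)).intervalIntegrable 0 c
    have := intervalIntegral.integral_eq_sub_of_hasDerivAt hG hint
    rw [sub_self, zero_mul, hΦ0, mul_zero, sub_zero] at this
    have hsplit : (∫ u in (0:ℝ)..c, (Φ u + (u - c) * F u))
        = (∫ u in (0:ℝ)..c, Φ u) + ∫ u in (0:ℝ)..c, (u - c) * F u :=
      intervalIntegral.integral_add (hΦc.intervalIntegrable 0 c)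
        (((continuous_id.sub continuous_const).mul hF).intervalIntegrable 0 c)
    have hneg : (∫ u in (0:ℝ)..c, (u - c) * F u) = -∫ s in (0:ℝ)..c, (c - s) * F s := by
      rw [← intervalIntegral.integral_neg]
      exact intervalIntegral.integral_congr fun u _ => by ring
    rw [hsplit, hneg] at this
    linarith
  rw [houter, e1, e2, hibp]
  ring

lemma J_scale (r c : ℝ) (hr : 0 < r) {h : ℝ} (hh : 0 < h) (k : ℕ) :
    (∫ s in (0:ℝ)..c, (c - s) * |phiPow r h s| ^ k)
      = h ^ (r * k + 1) * ∫ t in (0:ℝ)..(c / h), (c - h * t) * |phiPow r 1 t| ^ k := by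
  have key := intervalIntegral.integral_comp_mul_left
    (a := (0:ℝ)) (b := c / h) (c := h)
    (fun s => (c - s) * |phiPow r h s| ^ k) hh.ne'
  rw [mul_zero, mul_div_cancel₀ _ hh.ne'] at key
  have congr1 : (∫ t in (0:ℝ)..(c / h), (c - h * t) * |phiPow r h (h * t)| ^ k)
      = ∫ t in (0:ℝ)..(c / h), h ^ (r * k) * ((c - h * t) * |phiPow r 1 t| ^ k) := by
    refine intervalIntegral.integral_congr fun t _ => ?_
    rw [phiPow_scale r hh t, abs_mul, abs_of_pos (Real.rpow_pos_of_pos hh r), mul_pow,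
      ← Real.rpow_natCast (h ^ r) k, ← Real.rpow_mul hh.le]
    ring
  rw [congr1, intervalIntegral.integral_const_mul, smul_eq_mul] at key
  have hmain : (∫ s in (0:ℝ)..c, (c - s) * |phiPow r h s| ^ k)
      = h * (h ^ (r * k) * ∫ t in (0:ℝ)..(c / h), (c - h * t) * |phiPow r 1 t| ^ k) := by
    rw [key]; field_simp
  rw [hmain, Real.rpow_add hh, Real.rpow_one]
  ring

lemma integrable_phiPow_one (r : ℝ) (hr : 0 < r) (hr2 : r ≤ 2) (k : ℕ)
    (hcond : 1 < (2 - r) * k) :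
    IntegrableOn (fun s => |phiPow r 1 s| ^ k) (Set.Ioi (0:ℝ)) := by
  have hGc : Continuous fun s => |phiPow r 1 s| ^ k :=
    ((continuous_phiPow r 1 hr).abs).pow k
  have h1 : IntegrableOn (fun s => |phiPow r 1 s| ^ k) (Set.Ioc (0:ℝ) 2) :=
    hGc.integrableOn_Ioc
  have hβ : (r - 2) * k < -1 := by nlinarith [hcond]
  have h2 : IntegrableOn (fun s => |phiPow r 1 s| ^ k) (Set.Ioi (2:ℝ)) := by
    have hbound : IntegrableOn
        (fun t => (Kc r ^ k * ((2:ℝ) ^ ((r - 2) * k))⁻¹) * t ^ ((r - 2) * k))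
        (Set.Ioi (2:ℝ)) :=
      (integrableOn_Ioi_rpow_of_lt hβ (by norm_num)).const_mul _
    refine Integrable.mono' hbound (hGc.aestronglyMeasurable) ?_
    rw [ae_restrict_iff' measurableSet_Ioi]
    filter_upwards with t ht
    have ht0 : (0:ℝ) < t := lt_trans (by norm_num) ht
    have hb := phiPow_global r hr hr2 one_pos ht0
    rw [one_pow, mul_one] at hb
    have hGnn : (0:ℝ) ≤ |phiPow r 1 t| ^ k := by positivity
    rw [Real.norm_eq_abs, abs_of_nonneg hGnn]
    calc |phiPow r 1 t| ^ k ≤ (Kc r * (t / 2) ^ (r - 2)) ^ k :=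
          pow_le_pow_left₀ (abs_nonneg _) hb k
      _ = Kc r ^ k * ((t / 2) ^ (r - 2)) ^ k := mul_pow _ _ _
      _ = Kc r ^ k * (t / 2) ^ ((r - 2) * k) := by
          rw [← Real.rpow_natCast ((t/2) ^ (r-2)) k, ← Real.rpow_mul (by positivity)]
      _ = Kc r ^ k * (t ^ ((r - 2) * k) * ((2:ℝ) ^ ((r - 2) * k))⁻¹) := by
          rw [Real.div_rpow ht0.le (by norm_num), div_eq_mul_inv]
      _ = Kc r ^ k * ((2:ℝ) ^ ((r - 2) * k))⁻¹ * t ^ ((r - 2) * k) := by ring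
  have := h1.union h2
  rwa [Set.Ioc_union_Ioi_eq_Ioi (by norm_num : (0:ℝ) ≤ 2)] at this

lemma T_tendsto (r c : ℝ) (hr : 0 < r) (hr2 : r ≤ 2) (hcpos : 0 < c) (k : ℕ)
    (hint : IntegrableOn (fun s => |phiPow r 1 s| ^ k) (Set.Ioi (0:ℝ))) :
    Tendsto (fun h : ℝ => ∫ t in (0:ℝ)..(c / h), (c - h * t) * |phiPow r 1 t| ^ k)
      (𝓝[>] (0:ℝ)) (𝓝 (c * ∫ s in Set.Ioi (0:ℝ), |phiPow r 1 s| ^ k)) := by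
  set G : ℝ → ℝ := fun s => |phiPow r 1 s| ^ k with hG
  have hGc : Continuous G := ((continuous_phiPow r 1 hr).abs).pow k
  have hGnn : ∀ t, 0 ≤ G t := fun t => by positivity
  set F : ℝ → ℝ → ℝ := fun h => (Set.Ioc (0:ℝ) (c / h)).indicator (fun t => (c - h * t) * G t)
    with hF
  have key : Tendsto (fun h : ℝ => ∫ t in Set.Ioi (0:ℝ), F h t)
      (𝓝[>] (0:ℝ)) (𝓝 (∫ t in Set.Ioi (0:ℝ), c * G t)) := by
    apply MeasureTheory.tendsto_integral_filter_of_dominated_convergence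
      (bound := fun t => c * G t)
    · filter_upwards with h
      exact (((continuous_const.sub (continuous_const.mul continuous_id)).mul hGc).aestronglyMeasurable).indicator
        measurableSet_Ioc
    · filter_upwards [self_mem_nhdsWithin] with h (hh : 0 < h)
      rw [ae_restrict_iff' measurableSet_Ioi]
      filter_upwards with t ht
      by_cases hmem : t ∈ Set.Ioc 0 (c / h)
      · simp only [hF, Set.indicator_of_mem hmem]
        have h1 : h * t ≤ c := by
          have := hmem.2
          calc h * t ≤ h * (c / h) := by gcongr
            _ = c := by field_simp
        have h2 : 0 < h * t := mul_pos hh hmem.1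
        rw [Real.norm_eq_abs, abs_mul, abs_of_nonneg (by linarith : (0:ℝ) ≤ c - h * t),
          abs_of_nonneg (hGnn t)]
        have : c - h * t ≤ c := by linarith
        exact mul_le_mul_of_nonneg_right this (hGnn t)
      · simp only [hF, Set.indicator_of_notMem hmem, norm_zero]
        positivity
    · exact hint.const_mul c
    · rw [ae_restrict_iff' measurableSet_Ioi]
      filter_upwards with t ht
      have ht0 : (0:ℝ) < t := ht
      have htc : 0 < c / t := by positivity
      apply Tendsto.congr'
        (f₁ := fun h => (c - h * t) * G t)
      · filter_upwards [Ioo_mem_nhdsGT_of_mem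
          (by constructor <;> [rfl; exact htc] : (0:ℝ) ∈ Set.Ico 0 (c / t))] with h hh
        have : t ∈ Set.Ioc 0 (c / h) := by
          refine ⟨ht, ?_⟩
          rw [le_div_iff₀ hh.1]
          have := hh.2
          calc t * h ≤ t * (c / t) := by
                have h2 := hh.2
                gcongr
            _ = c := by rw [mul_comm]; exact div_mul_cancel₀ c ht0.ne'
        simp only [hF, Set.indicator_of_mem this]
      · have : Tendsto (fun h : ℝ => (c - h * t) * G t) (𝓝 (0:ℝ)) (𝓝 ((c - 0 * t) * G t)) := by
          exact ((tendsto_const_nhds.sub (tendsto_id.mul_const t)).mul_const (G t))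
        simpa using this.mono_left nhdsWithin_le_nhds
  have heq : (fun h : ℝ => ∫ t in (0:ℝ)..(c / h), (c - h * t) * G t)
      =ᶠ[𝓝[>] (0:ℝ)] (fun h => ∫ t in Set.Ioi (0:ℝ), F h t) := by
    filter_upwards [self_mem_nhdsWithin] with h (hh : 0 < h)
    have hch : (0:ℝ) ≤ c / h := by positivity
    rw [intervalIntegral.integral_of_le hch, hF]
    rw [MeasureTheory.setIntegral_indicator measurableSet_Ioc,
      Set.inter_eq_right.mpr Set.Ioc_subset_Ioi_self]
  have hlim : (∫ t in Set.Ioi (0:ℝ), c * G t) = c * ∫ s in Set.Ioi (0:ℝ), G s :=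
    integral_const_mul c G
  exact Tendsto.congr' heq.symm (hlim ▸ key)

lemma L_pos (r : ℝ) (hr : 0 < r) (k : ℕ)
    (hint : IntegrableOn (fun s => |phiPow r 1 s| ^ k) (Set.Ioi (0:ℝ))) :
    0 < ∫ s in Set.Ioi (0:ℝ), |phiPow r 1 s| ^ k := by
  set G : ℝ → ℝ := fun s => |phiPow r 1 s| ^ k with hG
  have hGc : Continuous G := ((continuous_phiPow r 1 hr).abs).pow k
  have hG0 : G 0 = 1 := by
    simp only [hG]
    unfold phiPow
    rw [show (0:ℝ) + 1 = 1 by ring, show (0:ℝ) - 1 = -1 by ring]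
    simp [Real.zero_rpow hr.ne', Real.one_rpow]
  have hcont := hGc.continuousAt (x := (0:ℝ))
  rw [Metric.continuousAt_iff] at hcont
  obtain ⟨δ, hδ, hball⟩ := hcont (1/2) (by norm_num)
  have hlow : ∀ t ∈ Set.Ioo (0:ℝ) δ, (0:ℝ) < G t := by
    intro t ht
    have hd : dist t 0 < δ := by
      rw [Real.dist_eq, sub_zero, abs_of_nonneg ht.1.le]; exact ht.2
    have := hball hd
    rw [Real.dist_eq, hG0] at this
    have := abs_lt.mp this
    linarith [this.1]
  rw [MeasureTheory.setIntegral_pos_iff_support_of_nonneg_ae ?pos hint]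
  case pos =>
    filter_upwards with t
    positivity
  · refine lt_of_lt_of_le ?_ (measure_mono (show Set.Ioo (0:ℝ) δ ⊆ Function.support G ∩ Set.Ioi 0 from ?_))
    · rw [Real.volume_Ioo]
      simp only [sub_zero]
      exact ENNReal.ofReal_pos.mpr hδ
    · intro t ht
      exact ⟨fun h0 => (hlow t ht).ne' h0, ht.1⟩

lemma phiPow_one_one (t : ℝ) (ht : 0 ≤ t) :
    phiPow 1 1 t = if t ≤ 1 then 1 - t else 0 := by
  unfold phiPow
  rw [Real.rpow_one, Real.rpow_one, Real.rpow_one, abs_of_nonneg (by linarith : (0:ℝ) ≤ t + 1),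
    abs_of_nonneg ht]
  split_ifs with h1
  · rw [abs_of_nonpos (by linarith : t - 1 ≤ 0)]; ring
  · rw [abs_of_nonneg (by linarith : (0:ℝ) ≤ t - 1)]; ring

lemma T_r1 (c : ℝ) (k : ℕ) (hk : 1 ≤ k) {h : ℝ} (hh : 0 < h) (hhc : h ≤ c) :
    (∫ t in (0:ℝ)..(c / h), (c - h * t) * |phiPow 1 1 t| ^ k)
      = (c - h) / (k + 1) + h / (k + 2) := by
  have hch1 : (1:ℝ) ≤ c / h := (le_div_iff₀ hh).mpr (by linarith)
  have hcont : Continuous fun t : ℝ => (c - h * t) * |phiPow 1 1 t| ^ k := by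
    have : Continuous (phiPow 1 1) := by
      unfold phiPow
      have h1 : Continuous fun s : ℝ => |s + 1| ^ (1:ℝ) :=
        (continuous_abs.comp (continuous_id.add continuous_const)).rpow_const fun x => Or.inr one_pos.le
      have h2 : Continuous fun s : ℝ => |s - 1| ^ (1:ℝ) :=
        (continuous_abs.comp (continuous_id.sub continuous_const)).rpow_const fun x => Or.inr one_pos.le
      have h3 : Continuous fun s : ℝ => |s| ^ (1:ℝ) :=
        continuous_abs.rpow_const fun x => Or.inr one_pos.le
      have := ((h1.add h2).sub (h3.mul (continuous_const (y := (2:ℝ))))).div_const 2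
      convert this using 2 with s
      simp only [Pi.add_apply, Pi.sub_apply, Pi.mul_apply]
      ring
    exact (continuous_const.sub (continuous_const.mul continuous_id)).mul ((this.abs).pow k)
  have hsplit : (∫ t in (0:ℝ)..(c / h), (c - h * t) * |phiPow 1 1 t| ^ k)
      = (∫ t in (0:ℝ)..(1:ℝ), (c - h * t) * |phiPow 1 1 t| ^ k)
        + ∫ t in (1:ℝ)..(c / h), (c - h * t) * |phiPow 1 1 t| ^ k :=
    (intervalIntegral.integral_add_adjacent_intervals (hcont.intervalIntegrable 0 1)
      (hcont.intervalIntegrable 1 (c / h))).symm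
  have hzero : (∫ t in (1:ℝ)..(c / h), (c - h * t) * |phiPow 1 1 t| ^ k) = 0 := by
    rw [intervalIntegral.integral_congr (g := fun _ => (0:ℝ))]
    · simp
    · intro t ht
      rw [Set.uIcc_of_le hch1] at ht
      have ht1 : (1:ℝ) ≤ t := ht.1
      show (c - h * t) * |phiPow 1 1 t| ^ k = 0
      rw [phiPow_one_one t (by linarith)]
      rcases eq_or_lt_of_le ht1 with heq | hlt
      · rw [← heq]; simp [zero_pow (by omega : k ≠ 0)]
      · rw [if_neg (by linarith)]
        simp [zero_pow (by omega : k ≠ 0)]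
  have hmain : (∫ t in (0:ℝ)..(1:ℝ), (c - h * t) * |phiPow 1 1 t| ^ k)
      = (c - h) / (k + 1) + h / (k + 2) := by
    rw [intervalIntegral.integral_congr
      (g := fun t => (fun u => (c - h + h * u) * u ^ k) (1 - t))]
    · rw [intervalIntegral.integral_comp_sub_left (fun u => (c - h + h * u) * u ^ k) 1]
      norm_num
      rw [intervalIntegral.integral_congr
        (g := fun u => (c - h) * u ^ k + h * u ^ (k + 1)) (fun u _ => by ring)]
      rw [intervalIntegral.integral_add, intervalIntegral.integral_const_mul,
        intervalIntegral.integral_const_mul, integral_pow, integral_pow]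
      · push_cast; field_simp; ring
      · exact ((continuous_const (y := c - h)).mul (continuous_pow k)).intervalIntegrable 0 1
      · exact ((continuous_const (y := h)).mul (continuous_pow (k+1))).intervalIntegrable 0 1
    · intro t ht
      rw [Set.uIcc_of_le (by norm_num : (0:ℝ) ≤ 1)] at ht
      show (c - h * t) * |phiPow 1 1 t| ^ k = (c - h + h * (1 - t)) * (1 - t) ^ k
      rw [phiPow_one_one t ht.1, if_pos ht.2, abs_of_nonneg (by linarith [ht.2] : (0:ℝ) ≤ 1 - t)]
      ring_nf
  rw [hsplit, hzero, hmain]; ring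

lemma case_i_tendsto (r c : ℝ) (hr1 : 1 ≤ r) (hr2 : r ≤ 2) (hcpos : 0 < c) (k : ℕ)
    (hα : -1 < (r - 2) * k) :
    Tendsto (fun h : ℝ => (∫ s in (0:ℝ)..c, (c - s) * |phiPow r h s| ^ k) / h ^ (2 * k))
      (𝓝[>] (0:ℝ))
      (𝓝 (∫ s in Set.Ioc (0:ℝ) c, (c - s) * |r * (r - 1) / 2 * s ^ (r - 2)| ^ k)) := by
  set α := (r - 2) * (k:ℝ) with hαdef
  have hr0 : (0:ℝ) < r := by linarith
  set g : ℝ → ℝ := fun s => c * Kc r ^ k * ((2:ℝ) ^ α)⁻¹ * s ^ α with hg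
  have hgint : IntegrableOn g (Set.Ioc (0:ℝ) c) := by
    have h1 : IntegrableOn (fun s : ℝ => s ^ α) (Set.Ioc (0:ℝ) c) :=
      (intervalIntegral.intervalIntegrable_rpow' hα (a := 0) (b := c)).1
    exact h1.const_mul _
  have key : Tendsto
      (fun h : ℝ => ∫ s in Set.Ioc (0:ℝ) c, (c - s) * |phiPow r h s| ^ k / h ^ (2 * k))
      (𝓝[>] (0:ℝ))
      (𝓝 (∫ s in Set.Ioc (0:ℝ) c, (c - s) * |r * (r - 1) / 2 * s ^ (r - 2)| ^ k)) := by
    apply MeasureTheory.tendsto_integral_filter_of_dominated_convergence (bound := g)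
    · filter_upwards with h
      exact (((continuous_const.sub continuous_id).mul
        (((continuous_phiPow r h hr0).abs).pow k)).div_const _).aestronglyMeasurable
    · filter_upwards [self_mem_nhdsWithin] with h (hh : 0 < h)
      rw [ae_restrict_iff' measurableSet_Ioc]
      filter_upwards with s hs
      have hs0 : 0 < s := hs.1
      have hsc : s ≤ c := hs.2
      have hb := phiPow_global r hr0 hr2 hh hs0
      have hh2k : (0:ℝ) < h ^ (2 * k) := pow_pos hh _
      rw [Real.norm_eq_abs, abs_div, abs_of_pos hh2k, abs_mul,
        abs_of_nonneg (by linarith : (0:ℝ) ≤ c - s), abs_pow, abs_abs]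
      rw [div_le_iff₀ hh2k]
      have step1 : |phiPow r h s| ^ k ≤ (Kc r * h ^ 2 * (s / 2) ^ (r - 2)) ^ k :=
        pow_le_pow_left₀ (abs_nonneg _) hb k
      have step2 : (Kc r * h ^ 2 * (s / 2) ^ (r - 2)) ^ k
          = Kc r ^ k * h ^ (2 * k) * (s / 2) ^ α := by
        rw [mul_pow, mul_pow, ← pow_mul, ← Real.rpow_natCast ((s/2) ^ (r-2)) k,
          ← Real.rpow_mul (by positivity)]
      have step3 : (s / 2) ^ α = s ^ α * ((2:ℝ) ^ α)⁻¹ := by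
        rw [Real.div_rpow hs0.le (by norm_num), div_eq_mul_inv]
      have h2αpos : (0:ℝ) < ((2:ℝ) ^ α)⁻¹ := by
        have : (0:ℝ) < (2:ℝ) ^ α := Real.rpow_pos_of_pos (by norm_num) _
        positivity
      have hsα : (0:ℝ) < s ^ α := Real.rpow_pos_of_pos hs0 _
      calc (c - s) * |phiPow r h s| ^ k
          ≤ (c - s) * (Kc r ^ k * h ^ (2 * k) * (s / 2) ^ α) := by
            rw [← step2]; exact mul_le_mul_of_nonneg_left step1 (by linarith)
        _ ≤ c * (Kc r ^ k * h ^ (2 * k) * (s / 2) ^ α) := by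
            have : (0:ℝ) ≤ Kc r ^ k * h ^ (2*k) * (s / 2) ^ α := by
              have := (Kc_pos r)
              have : (0:ℝ) < (s / 2) ^ α := Real.rpow_pos_of_pos (by positivity) _
              positivity
            exact mul_le_mul_of_nonneg_right (by linarith) this
        _ = g s * h ^ (2 * k) := by rw [hg, step3]; ring
    · exact hgint
    · rw [ae_restrict_iff' measurableSet_Ioc]
      filter_upwards with s hs
      have hs0 : 0 < s := hs.1
      have hφ := tendsto_phiPow_div r hr1 hr2 hs0
      have hcomp : Continuous fun y : ℝ => (c - s) * |y| ^ k :=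
        continuous_const.mul ((continuous_abs).pow k)
      have := (hcomp.continuousAt.tendsto).comp hφ
      refine Tendsto.congr' ?_ this
      filter_upwards [self_mem_nhdsWithin] with h (hh : 0 < h)
      show (c - s) * |phiPow r h s / h ^ 2| ^ k = (c - s) * |phiPow r h s| ^ k / h ^ (2 * k)
      rw [abs_div, abs_of_pos (pow_pos hh 2), div_pow, ← pow_mul]
      ring
  refine Tendsto.congr (fun h => ?_) key
  rw [intervalIntegral.integral_of_le hcpos.le, MeasureTheory.integral_div]

lemma M_eval (r c : ℝ) (hr1 : 1 < r) (hr2 : r ≤ 2) (hcpos : 0 < c) (k : ℕ)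
    (hα : -1 < (r - 2) * k) :
    (∫ s in Set.Ioc (0:ℝ) c, (c - s) * |r * (r - 1) / 2 * s ^ (r - 2)| ^ k)
      = (r * (r - 1) / 2) ^ k *
          (c ^ ((r - 2) * k + 2) / (((r - 2) * k + 1) * ((r - 2) * k + 2))) := by
  set α := (r - 2) * (k:ℝ) with hαdef
  have hD : (0:ℝ) < r * (r - 1) / 2 := by nlinarith
  have hα1 : (0:ℝ) < α + 1 := by linarith
  have hα2 : (0:ℝ) < α + 2 := by linarith
  have hcongr : Set.EqOn (fun s => (c - s) * |r * (r - 1) / 2 * s ^ (r - 2)| ^ k)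
      (fun s => (r * (r - 1) / 2) ^ k * (c * s ^ α - s ^ (α + 1))) (Set.Ioc 0 c) := by
    intro s hs
    have hs0 : (0:ℝ) < s := hs.1
    have hsr : (0:ℝ) < s ^ (r - 2) := Real.rpow_pos_of_pos hs0 _
    show (c - s) * |r * (r - 1) / 2 * s ^ (r - 2)| ^ k
      = (r * (r - 1) / 2) ^ k * (c * s ^ α - s ^ (α + 1))
    rw [abs_of_pos (by positivity), mul_pow, ← Real.rpow_natCast (s ^ (r-2)) k,
      ← Real.rpow_mul hs0.le, ← hαdef, Real.rpow_add_one hs0.ne' α]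
    ring
  rw [MeasureTheory.setIntegral_congr_fun measurableSet_Ioc hcongr]
  have i1 : IntervalIntegrable (fun s : ℝ => s ^ α) volume 0 c :=
    intervalIntegral.intervalIntegrable_rpow' hα
  have i2 : IntervalIntegrable (fun s : ℝ => s ^ (α + 1)) volume 0 c :=
    intervalIntegral.intervalIntegrable_rpow' (by linarith)
  have conv : (∫ s in Set.Ioc (0:ℝ) c,
        (r * (r - 1) / 2) ^ k * (c * s ^ α - s ^ (α + 1)))
      = ∫ s in (0:ℝ)..c, (r * (r - 1) / 2) ^ k * (c * s ^ α - s ^ (α + 1)) :=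
    (intervalIntegral.integral_of_le hcpos.le).symm
  rw [conv, intervalIntegral.integral_const_mul,
    intervalIntegral.integral_sub ((i1.const_mul c)) i2,
    intervalIntegral.integral_const_mul, integral_rpow (Or.inl hα),
    integral_rpow (Or.inl (by linarith : (-1:ℝ) < α + 1))]
  rw [Real.zero_rpow (by linarith : α + 1 ≠ 0), Real.zero_rpow (by linarith : α + 1 + 1 ≠ 0)]
  have hc2 : c ^ (α + 2) = c ^ (α + 1) * c := by
    rw [show α + 2 = (α + 1) + 1 by ring, Real.rpow_add_one hcpos.ne']
  rw [show α + 1 + 1 = α + 2 by ring, hc2]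
  field_simp
  ring


lemma Aeval_plus (c : ℝ) {h : ℝ} (hh : 0 < h) (h2c : 2 * h ≤ c) :
    (∫ s in (2*h)..c, (c - s) * (s - h)⁻¹)
      = (c - h) * (Real.log (c - h) - Real.log h) - (c - 2*h) := by
  have hcc : ContinuousOn (fun s : ℝ => (s - h)⁻¹) (Set.uIcc (2*h) c) := by
    rw [Set.uIcc_of_le h2c]
    refine ContinuousOn.inv₀ ((continuousOn_id.sub continuousOn_const)) ?_
    intro s hs heq; nlinarith [hs.1]
  have hint1 : IntervalIntegrable (fun s : ℝ => (s - h)⁻¹) volume (2*h) c :=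
    hcc.intervalIntegrable
  have hcongr : Set.EqOn (fun s : ℝ => (c - s) * (s - h)⁻¹)
      (fun s => (c - h) * (s - h)⁻¹ - 1) (Set.uIcc (2*h) c) := by
    intro s hs
    rw [Set.uIcc_of_le h2c] at hs
    have hsh : s - h ≠ 0 := by have := hs.1; intro hEq; nlinarith
    show (c - s) * (s - h)⁻¹ = (c - h) * (s - h)⁻¹ - 1
    field_simp
    ring
  rw [intervalIntegral.integral_congr hcongr,
    intervalIntegral.integral_sub (hint1.const_mul _) intervalIntegrable_const,
    intervalIntegral.integral_const_mul]
  have hshift : (∫ s in (2*h)..c, (s - h)⁻¹) = ∫ u in h..(c - h), u⁻¹ := by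
    have := intervalIntegral.integral_comp_sub_right (a := 2*h) (b := c)
      (fun u : ℝ => u⁻¹) h
    rw [show 2*h - h = h by ring] at this
    exact this
  rw [hshift, integral_inv (by rw [Set.uIcc_of_le (by linarith)]; intro hmem; exact absurd hmem.1 (by linarith) : (0:ℝ) ∉ Set.uIcc h (c - h))]
  rw [Real.log_div (by linarith) (by linarith)]
  rw [intervalIntegral.integral_const]
  simp only [smul_eq_mul, mul_one]

lemma Aeval_minus (c : ℝ) {h : ℝ} (hh : 0 < h) (h2c : 2 * h ≤ c) :
    (∫ s in (2*h)..c, (c - s) * (s + h)⁻¹)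
      = (c + h) * (Real.log (c + h) - Real.log 3 - Real.log h) - (c - 2*h) := by
  have hcc : ContinuousOn (fun s : ℝ => (s + h)⁻¹) (Set.uIcc (2*h) c) := by
    rw [Set.uIcc_of_le h2c]
    refine ContinuousOn.inv₀ ((continuousOn_id.add continuousOn_const)) ?_
    intro s hs hEq; nlinarith [hs.1]
  have hint1 : IntervalIntegrable (fun s : ℝ => (s + h)⁻¹) volume (2*h) c :=
    hcc.intervalIntegrable
  have hcongr : Set.EqOn (fun s : ℝ => (c - s) * (s + h)⁻¹)
      (fun s => (c + h) * (s + h)⁻¹ - 1) (Set.uIcc (2*h) c) := by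
    intro s hs
    rw [Set.uIcc_of_le h2c] at hs
    have hsh : s + h ≠ 0 := by intro hEq; nlinarith [hs.1]
    show (c - s) * (s + h)⁻¹ = (c + h) * (s + h)⁻¹ - 1
    field_simp
    ring
  rw [intervalIntegral.integral_congr hcongr,
    intervalIntegral.integral_sub (hint1.const_mul _) intervalIntegrable_const,
    intervalIntegral.integral_const_mul]
  have hshift : (∫ s in (2*h)..c, (s + h)⁻¹) = ∫ u in (3*h)..(c + h), u⁻¹ := by
    have := intervalIntegral.integral_comp_add_right (a := 2*h) (b := c)
      (fun u : ℝ => u⁻¹) h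
    rw [show 2*h + h = 3*h by ring] at this
    exact this
  rw [hshift, integral_inv (by rw [Set.uIcc_of_le (by linarith)]; intro hmem; exact absurd hmem.1 (by linarith) : (0:ℝ) ∉ Set.uIcc (3*h) (c + h))]
  rw [Real.log_div (by linarith) (by linarith), Real.log_mul (by norm_num) hh.ne']
  rw [intervalIntegral.integral_const]
  simp only [smul_eq_mul, mul_one]
  ring


/-- squeeze bounds for case (iii) -/
lemma J_bounds_iii (r c : ℝ) (hr2 : r ≤ 2) (hcpos : 0 < c) (k : ℕ) (hk2 : 2 ≤ k)
    (hcond : (2 - r) * k = 1) {h : ℝ} (hh : 0 < h) (h2c : 2 * h ≤ c) :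
    ((r * (r - 1) / 2) ^ k * h ^ (2 * k) * ∫ s in (2*h)..c, (c - s) * (s + h)⁻¹)
      ≤ (∫ s in (0:ℝ)..c, (c - s) * |phiPow r h s| ^ k)
    ∧ (∫ s in (0:ℝ)..c, (c - s) * |phiPow r h s| ^ k)
      ≤ 2 * c * Cr r ^ k * h ^ (2 * k)
        + (r * (r - 1) / 2) ^ k * h ^ (2 * k) * ∫ s in (2*h)..c, (c - s) * (s - h)⁻¹ := by
  have hk2' : (2:ℝ) ≤ (k:ℝ) := by exact_mod_cast hk2
  have hk1 : (1:ℝ) ≤ (k:ℝ) := by linarith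
  have hkpos : (0:ℝ) < (k:ℝ) := by linarith
  have hr32 : (3:ℝ)/2 ≤ r := by
    have h2r : 2 - r = 1 / (k:ℝ) := by rw [eq_div_iff hkpos.ne']; exact hcond
    have hhalf : 1 / (k:ℝ) ≤ 1 / 2 := by
      rw [div_le_div_iff₀ hkpos (by norm_num)]; linarith
    linarith
  have hr1 : (1:ℝ) < r := by linarith
  have hr0 : (0:ℝ) < r := by linarith
  have hrr : (0:ℝ) < r * (r - 1) := by nlinarith
  have hrk : (r - 2) * (k:ℝ) = -1 := by linarith [hcond]
  set D := (r * (r - 1) / 2) ^ k with hD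
  have hDpos : (0:ℝ) < D := by positivity
  have hφc : Continuous fun s => (c - s) * |phiPow r h s| ^ k :=
    (continuous_const.sub continuous_id).mul (((continuous_phiPow r h hr0).abs).pow k)
  -- pointwise two-sided bound on [2h, c]
  have hpt : ∀ s ∈ Set.Icc (2*h) c,
      D * h ^ (2*k) * ((c - s) * (s + h)⁻¹) ≤ (c - s) * |phiPow r h s| ^ k
      ∧ (c - s) * |phiPow r h s| ^ k ≤ D * h ^ (2*k) * ((c - s) * (s - h)⁻¹) := by
    intro s hs
    have hs1 : h < s := by nlinarith [hs.1]
    have hsc : s ≤ c := hs.2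
    obtain ⟨ξ, hξ, heq⟩ := phiPow_eq_deriv2 r hh hs1
    have hξ0 : 0 < ξ := by have := hξ.1; linarith
    have hφpos : 0 < phiPow r h s := by
      rw [heq]
      have : (0:ℝ) < ξ ^ (r - 2) := Real.rpow_pos_of_pos hξ0 _
      positivity
    have habs : |phiPow r h s| = phiPow r h s := abs_of_pos hφpos
    have hpow' : ∀ x : ℝ, 0 < x → (h ^ 2 / 2 * (r * (r - 1) * x ^ (r - 2))) ^ k
        = D * h ^ (2*k) * x⁻¹ := by
      intro x hx
      have h1 : (x ^ (r - 2)) ^ k = x ^ ((r-2) * (k:ℝ)) := by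
        rw [← Real.rpow_natCast (x ^ (r-2)) k, ← Real.rpow_mul hx.le]
      have h2 : x ^ ((r-2) * (k:ℝ)) = x⁻¹ := by rw [hrk, Real.rpow_neg_one]
      rw [show h ^ 2 / 2 * (r * (r - 1) * x ^ (r - 2))
          = h ^ 2 * (r * (r - 1) / 2) * x ^ (r - 2) by ring,
        mul_pow, mul_pow, h1, h2, ← pow_mul, hD]
      ring
    constructor
    · -- lower
      have hmono : (h ^ 2 / 2 * (r * (r - 1) * (s + h) ^ (r - 2)))
          ≤ phiPow r h s := by
        rw [heq]
        have : (s + h) ^ (r - 2) ≤ ξ ^ (r - 2) :=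
          Real.rpow_le_rpow_of_nonpos hξ0 (le_of_lt hξ.2) (by linarith)
        have hb : (0:ℝ) ≤ h ^ 2 / 2 := by positivity
        have hc' : (0:ℝ) ≤ r * (r - 1) := hrr.le
        calc h ^ 2 / 2 * (r * (r - 1) * (s + h) ^ (r - 2))
            ≤ h ^ 2 / 2 * (r * (r - 1) * ξ ^ (r - 2)) := by gcongr
          _ = _ := rfl
      have hlhs : (0:ℝ) ≤ h ^ 2 / 2 * (r * (r - 1) * (s + h) ^ (r - 2)) := by
        have : (0:ℝ) < (s + h) ^ (r - 2) := Real.rpow_pos_of_pos (by linarith) _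
        positivity
      have := pow_le_pow_left₀ hlhs hmono k
      rw [hpow' (s + h) (by linarith)] at this
      rw [habs]
      calc D * h ^ (2*k) * ((c - s) * (s + h)⁻¹)
          = (c - s) * (D * h ^ (2*k) * (s + h)⁻¹) := by ring
        _ ≤ (c - s) * phiPow r h s ^ k :=
            mul_le_mul_of_nonneg_left this (by linarith)
        _ = (c - s) * phiPow r h s ^ k := rfl
    · -- upper
      have hmono : phiPow r h s ≤ h ^ 2 / 2 * (r * (r - 1) * (s - h) ^ (r - 2)) := by
        rw [heq]
        have : ξ ^ (r - 2) ≤ (s - h) ^ (r - 2) :=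
          Real.rpow_le_rpow_of_nonpos (by linarith) (le_of_lt hξ.1) (by linarith)
        have hb : (0:ℝ) ≤ h ^ 2 / 2 := by positivity
        have hc' : (0:ℝ) ≤ r * (r - 1) := hrr.le
        gcongr
      have := pow_le_pow_left₀ hφpos.le hmono k
      rw [hpow' (s - h) (by linarith)] at this
      rw [habs]
      calc (c - s) * phiPow r h s ^ k
          ≤ (c - s) * (D * h ^ (2*k) * (s - h)⁻¹) :=
            mul_le_mul_of_nonneg_left this (by linarith)
        _ = D * h ^ (2*k) * ((c - s) * (s - h)⁻¹) := by ring
  -- integrability of the comparison functions on [2h,c]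
  have hcmp1 : IntervalIntegrable (fun s => D * h ^ (2*k) * ((c - s) * (s + h)⁻¹))
      volume (2*h) c := by
    apply ContinuousOn.intervalIntegrable
    rw [Set.uIcc_of_le h2c]
    refine (continuousOn_const.mul (((continuousOn_const.sub continuousOn_id)).mul
      (ContinuousOn.inv₀ (continuousOn_id.add continuousOn_const) ?_)))
    intro s hs hEq; nlinarith [hs.1]
  have hcmp2 : IntervalIntegrable (fun s => D * h ^ (2*k) * ((c - s) * (s - h)⁻¹))
      volume (2*h) c := by
    apply ContinuousOn.intervalIntegrable
    rw [Set.uIcc_of_le h2c]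
    refine (continuousOn_const.mul (((continuousOn_const.sub continuousOn_id)).mul
      (ContinuousOn.inv₀ (continuousOn_id.sub continuousOn_const) ?_)))
    intro s hs hEq; nlinarith [hs.1]
  -- split J
  have hsplit : (∫ s in (0:ℝ)..c, (c - s) * |phiPow r h s| ^ k)
      = (∫ s in (0:ℝ)..(2*h), (c - s) * |phiPow r h s| ^ k)
        + ∫ s in (2*h)..c, (c - s) * |phiPow r h s| ^ k :=
    (intervalIntegral.integral_add_adjacent_intervals (hφc.intervalIntegrable _ _)
      (hφc.intervalIntegrable _ _)).symm
  have hpart0_nonneg : 0 ≤ ∫ s in (0:ℝ)..(2*h), (c - s) * |phiPow r h s| ^ k := by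
    apply intervalIntegral.integral_nonneg (by linarith)
    intro s hs
    have hsc : s ≤ c := le_trans hs.2 h2c
    exact mul_nonneg (by linarith) (by positivity)
  have hpart0_upper : (∫ s in (0:ℝ)..(2*h), (c - s) * |phiPow r h s| ^ k)
      ≤ 2 * c * Cr r ^ k * h ^ (2*k) := by
    have hconst : ∀ s ∈ Set.Icc (0:ℝ) (2*h), (c - s) * |phiPow r h s| ^ k
        ≤ c * (Cr r * h ^ r) ^ k := by
      intro s hs
      have hcrude := phiPow_crude r hr0 hh hs.1 hs.2
      have h1 : |phiPow r h s| ^ k ≤ (Cr r * h ^ r) ^ k :=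
        pow_le_pow_left₀ (abs_nonneg _) hcrude k
      have h2 : c - s ≤ c := by linarith [hs.1]
      have h3 : (0:ℝ) ≤ c - s := by linarith [hs.2, h2c]
      calc (c - s) * |phiPow r h s| ^ k ≤ (c - s) * (Cr r * h ^ r) ^ k :=
            mul_le_mul_of_nonneg_left h1 h3
        _ ≤ c * (Cr r * h ^ r) ^ k := by
            have : (0:ℝ) ≤ (Cr r * h ^ r) ^ k := by
              have := Cr_pos r
              have := Real.rpow_pos_of_pos hh r
              positivity
            exact mul_le_mul_of_nonneg_right h2 this
    have hbound := intervalIntegral.integral_mono_on (by linarith : (0:ℝ) ≤ 2*h)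
      (hφc.intervalIntegrable _ _) (intervalIntegrable_const (μ := volume)) hconst
    rw [intervalIntegral.integral_const] at hbound
    have heval : (2*h - 0) • (c * (Cr r * h ^ r) ^ k) = 2 * c * Cr r ^ k * h ^ (2*k) := by
      rw [smul_eq_mul, sub_zero]
      have h1 : (h ^ r) ^ k = h ^ (r * (k:ℝ)) := by
        rw [← Real.rpow_natCast (h ^ r) k, ← Real.rpow_mul hh.le]
      have h2 : h * h ^ (r * (k:ℝ)) = h ^ (r * (k:ℝ) + 1) := by
        rw [Real.rpow_add_one hh.ne']; ring
      have h3 : r * (k:ℝ) + 1 = ((2*k : ℕ) : ℝ) := by push_cast; linarith [hcond]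
      have h4 : h ^ (r * (k:ℝ) + 1) = h ^ (2*k) := by
        rw [h3, Real.rpow_natCast]
      rw [mul_pow, h1]
      calc 2 * h * (c * (Cr r ^ k * h ^ (r * (k:ℝ))))
          = 2 * c * Cr r ^ k * (h * h ^ (r * (k:ℝ))) := by ring
        _ = 2 * c * Cr r ^ k * h ^ (2*k) := by rw [h2, h4]
    calc (∫ s in (0:ℝ)..(2*h), (c - s) * |phiPow r h s| ^ k)
        ≤ (2*h - 0) • (c * (Cr r * h ^ r) ^ k) := hbound
      _ = 2 * c * Cr r ^ k * h ^ (2*k) := heval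
  have hmono_lower := intervalIntegral.integral_mono_on h2c hcmp1
    (hφc.intervalIntegrable _ _) (fun s hs => (hpt s hs).1)
  have hmono_upper := intervalIntegral.integral_mono_on h2c
    (hφc.intervalIntegrable _ _) hcmp2 (fun s hs => (hpt s hs).2)
  rw [intervalIntegral.integral_const_mul] at hmono_lower hmono_upper
  constructor
  · rw [hsplit]
    linarith [hpart0_nonneg, hmono_lower]
  · rw [hsplit]
    linarith [hpart0_upper, hmono_upper]

lemma case_iii_tendsto (r c : ℝ) (hr2 : r ≤ 2) (hcpos : 0 < c) (k : ℕ) (hk2 : 2 ≤ k)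
    (hcond : (2 - r) * k = 1) :
    Tendsto (fun h : ℝ => (∫ s in (0:ℝ)..c, (c - s) * |phiPow r h s| ^ k) /
        (c * (r * (r - 1) / 2) ^ k * h ^ (2 * k) * Real.log (1 / h)))
      (𝓝[>] (0:ℝ)) (𝓝 1) := by
  have hk2' : (2:ℝ) ≤ (k:ℝ) := by exact_mod_cast hk2
  have hkpos : (0:ℝ) < (k:ℝ) := by linarith
  have hr32 : (3:ℝ)/2 ≤ r := by
    have h2r : 2 - r = 1 / (k:ℝ) := by rw [eq_div_iff hkpos.ne']; exact hcond
    have hhalf : 1 / (k:ℝ) ≤ 1 / 2 := by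
      rw [div_le_div_iff₀ hkpos (by norm_num)]; linarith
    linarith
  have hrr : (0:ℝ) < r * (r - 1) := by nlinarith
  set D := (r * (r - 1) / 2) ^ k with hD
  have hDpos : (0:ℝ) < D := by positivity
  set B₀ := 2 * c * Cr r ^ k with hB₀
  have hB₀pos : (0:ℝ) < B₀ := by have := Cr_pos r; positivity
  -- limit machinery
  have hlogcp : Tendsto (fun h : ℝ => Real.log (c + h)) (𝓝[>] (0:ℝ)) (𝓝 (Real.log c)) := by
    have h1 : Tendsto (fun h : ℝ => c + h) (𝓝[>] (0:ℝ)) (𝓝 c) := by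
      have : Tendsto (fun h : ℝ => c + h) (𝓝 (0:ℝ)) (𝓝 (c + 0)) :=
        tendsto_const_nhds.add tendsto_id
      simpa using this.mono_left nhdsWithin_le_nhds
    exact (Real.continuousAt_log hcpos.ne').tendsto.comp h1
  have hlogcm : Tendsto (fun h : ℝ => Real.log (c - h)) (𝓝[>] (0:ℝ)) (𝓝 (Real.log c)) := by
    have h1 : Tendsto (fun h : ℝ => c - h) (𝓝[>] (0:ℝ)) (𝓝 c) := by
      have : Tendsto (fun h : ℝ => c - h) (𝓝 (0:ℝ)) (𝓝 (c - 0)) :=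
        tendsto_const_nhds.sub tendsto_id
      simpa using this.mono_left nhdsWithin_le_nhds
    exact (Real.continuousAt_log hcpos.ne').tendsto.comp h1
  have hid : Tendsto (fun h : ℝ => h) (𝓝[>] (0:ℝ)) (𝓝 0) :=
    tendsto_id.mono_left nhdsWithin_le_nhds
  have hℓtop : Tendsto (fun h : ℝ => c * Real.log (1 / h)) (𝓝[>] (0:ℝ)) atTop := by
    have h0 : Tendsto (fun h : ℝ => -Real.log h) (𝓝[>] (0:ℝ)) atTop :=
      tendsto_neg_atTop_iff.mpr Real.tendsto_log_nhdsGT_zero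
    have h1 : Tendsto (fun h : ℝ => Real.log (1 / h)) (𝓝[>] (0:ℝ)) atTop := by
      refine h0.congr fun h => ?_
      rw [one_div, Real.log_inv]
    exact h1.const_mul_atTop hcpos
  -- lower and upper comparison functions
  set LB : ℝ → ℝ := fun h =>
    ((c + h) * (Real.log (c + h) - Real.log 3) - (c - 2*h)) / (c * Real.log (1/h))
      + (c + h) / c with hLB
  set UB : ℝ → ℝ := fun h =>
    (B₀ / D + (c - h) * Real.log (c - h) - (c - 2*h)) / (c * Real.log (1/h))
      + (c - h) / c with hUB
  have hLBlim : Tendsto LB (𝓝[>] (0:ℝ)) (𝓝 1) := by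
    have hnum : Tendsto (fun h : ℝ => (c + h) * (Real.log (c + h) - Real.log 3) - (c - 2*h))
        (𝓝[>] (0:ℝ)) (𝓝 ((c + 0) * (Real.log c - Real.log 3) - (c - 2*0))) :=
      ((tendsto_const_nhds.add hid).mul (hlogcp.sub tendsto_const_nhds)).sub
        (tendsto_const_nhds.sub (hid.const_mul 2))
    have h1 : Tendsto (fun h : ℝ =>
        ((c + h) * (Real.log (c + h) - Real.log 3) - (c - 2*h)) / (c * Real.log (1/h)))
        (𝓝[>] (0:ℝ)) (𝓝 0) := hnum.div_atTop hℓtop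
    have h2 : Tendsto (fun h : ℝ => (c + h) / c) (𝓝[>] (0:ℝ)) (𝓝 ((c + 0)/c)) :=
      (tendsto_const_nhds.add hid).div_const c
    have := h1.add h2
    rw [hLB]
    convert this using 2
    rw [add_zero, div_self hcpos.ne']
    ring
  have hUBlim : Tendsto UB (𝓝[>] (0:ℝ)) (𝓝 1) := by
    have hnum : Tendsto (fun h : ℝ => B₀ / D + (c - h) * Real.log (c - h) - (c - 2*h))
        (𝓝[>] (0:ℝ)) (𝓝 (B₀ / D + (c - 0) * Real.log c - (c - 2*0))) :=
      (tendsto_const_nhds.add ((tendsto_const_nhds.sub hid).mul hlogcm)).sub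
        (tendsto_const_nhds.sub (hid.const_mul 2))
    have h1 : Tendsto (fun h : ℝ =>
        (B₀ / D + (c - h) * Real.log (c - h) - (c - 2*h)) / (c * Real.log (1/h)))
        (𝓝[>] (0:ℝ)) (𝓝 0) := hnum.div_atTop hℓtop
    have h2 : Tendsto (fun h : ℝ => (c - h) / c) (𝓝[>] (0:ℝ)) (𝓝 ((c - 0)/c)) :=
      (tendsto_const_nhds.sub hid).div_const c
    have := h1.add h2
    rw [hUB]
    convert this using 2
    rw [sub_zero, div_self hcpos.ne']
    ring
  refine tendsto_of_tendsto_of_tendsto_of_le_of_le' hLBlim hUBlim ?_ ?_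
  · filter_upwards [Ioo_mem_nhdsGT_of_mem
      (by constructor <;> [rfl; positivity] : (0:ℝ) ∈ Set.Ico 0 (min (c/2) 2⁻¹))] with h hh
    obtain ⟨hh0, hhm⟩ := hh
    have h2c : 2 * h ≤ c := by
      have := lt_of_lt_of_le hhm (min_le_left _ _); linarith
    have hh1 : h < 1 := by
      have := lt_of_lt_of_le hhm (min_le_right _ _); linarith
    have hℓpos : 0 < Real.log (1/h) := by
      rw [one_div, Real.log_inv]
      linarith [Real.log_neg hh0 hh1]
    have hbounds := J_bounds_iii r c hr2 hcpos k hk2 hcond hh0 h2c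
    have hden : (0:ℝ) < c * D * h ^ (2*k) * Real.log (1/h) := by
      have := pow_pos hh0 (2*k); positivity
    have hp : (0:ℝ) < h ^ (2*k) := pow_pos hh0 _
    have hDh : (D * h ^ (2*k)) ≠ 0 := by positivity
    have cancel : ∀ X : ℝ, (D * h ^ (2*k) * X) / (c * D * h ^ (2*k) * Real.log (1/h))
        = X / (c * Real.log (1/h)) := by
      intro X
      rw [show c * D * h ^ (2*k) * Real.log (1/h)
          = (D * h ^ (2*k)) * (c * Real.log (1/h)) by ring,
        mul_div_mul_left X _ hDh]
    have hlog1h : Real.log (1/h) = -Real.log h := by rw [one_div, Real.log_inv]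
    have key : LB h = (D * h ^ (2*k) * ∫ s in (2*h)..c, (c - s) * (s + h)⁻¹)
        / (c * D * h ^ (2*k) * Real.log (1/h)) := by
      rw [Aeval_minus c hh0 h2c, cancel]
      rw [show (c + h) * (Real.log (c + h) - Real.log 3 - Real.log h) - (c - 2*h)
          = ((c + h) * (Real.log (c + h) - Real.log 3) - (c - 2*h))
            + (c + h) * Real.log (1/h) by rw [hlog1h]; ring, add_div]
      rw [show (c + h) * Real.log (1/h) / (c * Real.log (1/h)) = (c + h) / c from
        mul_div_mul_right _ _ hℓpos.ne']
    rw [key]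
    rw [← hD] at hbounds
    gcongr
    exact hbounds.1
  · filter_upwards [Ioo_mem_nhdsGT_of_mem
      (by constructor <;> [rfl; positivity] : (0:ℝ) ∈ Set.Ico 0 (min (c/2) 2⁻¹))] with h hh
    obtain ⟨hh0, hhm⟩ := hh
    have h2c : 2 * h ≤ c := by
      have := lt_of_lt_of_le hhm (min_le_left _ _); linarith
    have hh1 : h < 1 := by
      have := lt_of_lt_of_le hhm (min_le_right _ _); linarith
    have hℓpos : 0 < Real.log (1/h) := by
      rw [one_div, Real.log_inv]
      linarith [Real.log_neg hh0 hh1]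
    have hbounds := J_bounds_iii r c hr2 hcpos k hk2 hcond hh0 h2c
    have hden : (0:ℝ) < c * D * h ^ (2*k) * Real.log (1/h) := by
      have := pow_pos hh0 (2*k); positivity
    have hp : (0:ℝ) < h ^ (2*k) := pow_pos hh0 _
    have hDh : (D * h ^ (2*k)) ≠ 0 := by positivity
    have cancel : ∀ X : ℝ, (D * h ^ (2*k) * X) / (c * D * h ^ (2*k) * Real.log (1/h))
        = X / (c * Real.log (1/h)) := by
      intro X
      rw [show c * D * h ^ (2*k) * Real.log (1/h)
          = (D * h ^ (2*k)) * (c * Real.log (1/h)) by ring,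
        mul_div_mul_left X _ hDh]
    have hlog1h : Real.log (1/h) = -Real.log h := by rw [one_div, Real.log_inv]
    have key : UB h = (B₀ * h ^ (2*k) + D * h ^ (2*k) * ∫ s in (2*h)..c, (c - s) * (s - h)⁻¹)
        / (c * D * h ^ (2*k) * Real.log (1/h)) := by
      rw [Aeval_plus c hh0 h2c]
      rw [show B₀ * h ^ (2*k) + D * h ^ (2*k) *
            ((c - h) * (Real.log (c - h) - Real.log h) - (c - 2*h))
          = D * h ^ (2*k) * ((B₀ / D + (c - h) * Real.log (c - h) - (c - 2*h))
              + (c - h) * Real.log (1/h)) by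
        rw [hlog1h]; field_simp; ring]
      rw [cancel, add_div]
      rw [show (c - h) * Real.log (1/h) / (c * Real.log (1/h)) = (c - h) / c from
        mul_div_mul_right _ _ hℓpos.ne']
    rw [key]
    rw [← hD, ← hB₀] at hbounds
    gcongr
    exact hbounds.2


/-- **Lemma 4.2.** Let `σ²(h) = h^r`, `0 < r ≤ 2`, `a < b`, `c = b − a`, `k ≥ 1`.
Then, at zero:
(i) if `(2−r)k < 1`, `∫_a^b∫_a^b |φ_h(x−y)|^k ∼
  [2 r^k |r−1|^k c^{(r−2)k+2}/(2^k((r−2)k+1)((r−2)k+2))] h^{2k}`;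
(ii) if `r = 1`, `∫∫|φ_h|^k ∼ 2c h^{k+1}/(k+1)`;
(iii) if `(2−r)k = 1`, `k ≥ 2`, `∫∫|φ_h|^k ∼ 2c |r(r−1)/2|^k h^{2k} log(1/h)`;
(iv) if `(2−r)k > 1`, `∫∫|φ_h|^k ∼ 2c h^{rk+1} ∫_0^∞ |φ_1(s)|^k ds`, the last
integral being finite. -/
theorem phiPow_double_integral_asymptotics (r a b c : ℝ) (hr : 0 < r) (hr2 : r ≤ 2)
    (hab : a < b) (hc : c = b - a) (k : ℕ) (hk : 1 ≤ k) :
    ((2 - r) * k < 1 →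
      Tendsto (fun h : ℝ => (∫ x in a..b, ∫ y in a..b, |phiPow r h (x - y)| ^ k) /
          ((2 * r ^ k * |r - 1| ^ k * c ^ ((r - 2) * k + 2) /
              (2 ^ k * ((r - 2) * k + 1) * ((r - 2) * k + 2))) * h ^ (2 * k)))
        (𝓝[>] (0:ℝ)) (𝓝 1)) ∧
    (r = 1 →
      Tendsto (fun h : ℝ => (∫ x in a..b, ∫ y in a..b, |phiPow r h (x - y)| ^ k) /
          (2 * c * h ^ (k + 1) / (k + 1)))
        (𝓝[>] (0:ℝ)) (𝓝 1)) ∧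
    ((2 - r) * k = 1 → 2 ≤ k →
      Tendsto (fun h : ℝ => (∫ x in a..b, ∫ y in a..b, |phiPow r h (x - y)| ^ k) /
          (2 * c * |r * (r - 1) / 2| ^ k * h ^ (2 * k) * Real.log (1 / h)))
        (𝓝[>] (0:ℝ)) (𝓝 1)) ∧
    (1 < (2 - r) * k →
      IntegrableOn (fun s => |phiPow r 1 s| ^ k) (Set.Ioi (0:ℝ)) ∧
      Tendsto (fun h : ℝ => (∫ x in a..b, ∫ y in a..b, |phiPow r h (x - y)| ^ k) /
          (2 * c * h ^ (r * k + 1) * ∫ s in Set.Ioi (0:ℝ), |phiPow r 1 s| ^ k))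
        (𝓝[>] (0:ℝ)) (𝓝 1)) := by
  have hcpos : 0 < c := by rw [hc]; linarith
  have hk1 : (1:ℝ) ≤ (k:ℝ) := by exact_mod_cast hk
  have hdbl : ∀ h : ℝ, (∫ x in a..b, ∫ y in a..b, |phiPow r h (x - y)| ^ k)
      = 2 * ∫ s in (0:ℝ)..c, (c - s) * |phiPow r h s| ^ k := by
    intro h
    have := double_integral_eq (fun s => |phiPow r h s| ^ k)
      (((continuous_phiPow r h hr).abs).pow k)
      (fun s => by simp only [phiPow_neg]) a b
    rw [this, ← hc]
  refine ⟨?_, ?_, ?_, ?_⟩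
  · -- case (i)
    intro hcase
    have hr1 : 1 < r := by nlinarith
    have hα : (-1:ℝ) < (r - 2) * k := by
      have : (r - 2) * (k:ℝ) = -((2 - r) * k) := by ring
      linarith
    have key := case_i_tendsto r c hr1.le hr2 hcpos k hα
    rw [M_eval r c hr1 hr2 hcpos k hα] at key
    set Mv := (r * (r - 1) / 2) ^ k *
      (c ^ ((r - 2) * (k:ℝ) + 2) / (((r - 2) * (k:ℝ) + 1) * ((r - 2) * (k:ℝ) + 2))) with hMv
    have hα1 : (0:ℝ) < (r - 2) * k + 1 := by linarith
    have hα2 : (0:ℝ) < (r - 2) * k + 2 := by linarith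
    have hMvpos : 0 < Mv := by
      have hcp : (0:ℝ) < c ^ ((r - 2) * (k:ℝ) + 2) := Real.rpow_pos_of_pos hcpos _
      have hrr : (0:ℝ) < r * (r - 1) / 2 := by nlinarith
      positivity
    have hconst : (2 * r ^ k * |r - 1| ^ k * c ^ ((r - 2) * (k:ℝ) + 2) /
        (2 ^ k * ((r - 2) * (k:ℝ) + 1) * ((r - 2) * (k:ℝ) + 2))) = 2 * Mv := by
      rw [hMv, abs_of_pos (by linarith : (0:ℝ) < r - 1), div_pow, mul_pow]
      field_simp
    have final : Tendsto (fun h : ℝ =>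
        ((∫ s in (0:ℝ)..c, (c - s) * |phiPow r h s| ^ k) / h ^ (2 * k)) / Mv)
        (𝓝[>] (0:ℝ)) (𝓝 1) := by
      have := key.div_const Mv
      rwa [div_self hMvpos.ne'] at this
    refine Tendsto.congr' ?_ final
    filter_upwards [self_mem_nhdsWithin] with h (hh : 0 < h)
    rw [hdbl h, hconst]
    have hp : ((h:ℝ) ^ (2 * k)) ≠ 0 := (pow_pos hh _).ne'
    field_simp
  · -- case (ii)
    intro hr1
    subst hr1
    have hid : Tendsto (fun h : ℝ => h) (𝓝[>] (0:ℝ)) (𝓝 0) :=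
      tendsto_id.mono_left nhdsWithin_le_nhds
    have hlim : Tendsto (fun h : ℝ => ((c - h) / ((k:ℝ) + 1) + h / ((k:ℝ) + 2)) * (((k:ℝ) + 1) / c))
        (𝓝[>] (0:ℝ)) (𝓝 1) := by
      have h1 : Tendsto (fun h : ℝ => (c - h) / ((k:ℝ) + 1) + h / ((k:ℝ) + 2))
          (𝓝[>] (0:ℝ)) (𝓝 ((c - 0) / ((k:ℝ) + 1) + 0 / ((k:ℝ) + 2))) :=
        ((tendsto_const_nhds.sub hid).div_const _).add (hid.div_const _)
      have h2 := h1.mul_const (((k:ℝ) + 1) / c)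
      have h3 : ((c - 0) / ((k:ℝ) + 1) + 0 / ((k:ℝ) + 2)) * (((k:ℝ) + 1) / c) = 1 := by
        have : ((k:ℝ) + 1) ≠ 0 := by positivity
        have hc0 : c ≠ 0 := hcpos.ne'
        field_simp
        ring
      rwa [h3] at h2
    refine Tendsto.congr' ?_ hlim
    filter_upwards [Ioo_mem_nhdsGT_of_mem
      (⟨le_refl _, hcpos⟩ : (0:ℝ) ∈ Set.Ico 0 c)] with h hh
    obtain ⟨hh0, hhc⟩ := hh
    rw [hdbl h, J_scale 1 c one_pos hh0 k, T_r1 c k hk hh0 hhc.le]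
    have hexp : (1:ℝ) * (k:ℝ) + 1 = ((k + 1 : ℕ):ℝ) := by push_cast; ring
    rw [hexp, Real.rpow_natCast]
    have hp : ((h:ℝ) ^ (k + 1)) ≠ 0 := (pow_pos hh0 _).ne'
    have hk1' : ((k:ℝ) + 1) ≠ 0 := by positivity
    have hk2' : ((k:ℝ) + 2) ≠ 0 := by positivity
    field_simp
  · -- case (iii)
    intro hcase hk2
    have key := case_iii_tendsto r c hr2 hcpos k hk2 hcase
    have hk2' : (2:ℝ) ≤ (k:ℝ) := by exact_mod_cast hk2
    have hkpos : (0:ℝ) < (k:ℝ) := by linarith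
    have hr32 : (3:ℝ)/2 ≤ r := by
      have h2r : 2 - r = 1 / (k:ℝ) := by rw [eq_div_iff hkpos.ne']; exact hcase
      have hhalf : 1 / (k:ℝ) ≤ 1 / 2 := by
        rw [div_le_div_iff₀ hkpos (by norm_num)]; linarith
      linarith
    have hrr : (0:ℝ) < r * (r - 1) / 2 := by nlinarith
    refine Tendsto.congr' ?_ key
    filter_upwards with h
    rw [hdbl h, abs_of_pos hrr,
      show 2 * c * (r * (r - 1) / 2) ^ k * h ^ (2 * k) * Real.log (1 / h)
        = 2 * (c * (r * (r - 1) / 2) ^ k * h ^ (2 * k) * Real.log (1 / h)) by ring,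
      mul_div_mul_left _ _ (two_ne_zero)]
  · -- case (iv)
    intro hcase
    have hint := integrable_phiPow_one r hr hr2 k hcase
    refine ⟨hint, ?_⟩
    have hT := T_tendsto r c hr hr2 hcpos k hint
    have hL := L_pos r hr k hint
    have hcL : (0:ℝ) < c * ∫ s in Set.Ioi (0:ℝ), |phiPow r 1 s| ^ k := by positivity
    have final : Tendsto (fun h : ℝ =>
        (∫ t in (0:ℝ)..(c / h), (c - h * t) * |phiPow r 1 t| ^ k)
          / (c * ∫ s in Set.Ioi (0:ℝ), |phiPow r 1 s| ^ k))
        (𝓝[>] (0:ℝ)) (𝓝 1) := by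
      have := hT.div_const (c * ∫ s in Set.Ioi (0:ℝ), |phiPow r 1 s| ^ k)
      rwa [div_self hcL.ne'] at this
    refine Tendsto.congr' ?_ final
    filter_upwards [self_mem_nhdsWithin] with h (hh : 0 < h)
    rw [hdbl h, J_scale r c hr hh k]
    have hp : (0:ℝ) < h ^ (r * (k:ℝ) + 1) := Real.rpow_pos_of_pos hh _
    rw [show (2:ℝ) * (h ^ (r * (k:ℝ) + 1) *
          ∫ t in (0:ℝ)..(c / h), (c - h * t) * |phiPow r 1 t| ^ k)
        = (2 * h ^ (r * (k:ℝ) + 1)) *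
          ∫ t in (0:ℝ)..(c / h), (c - h * t) * |phiPow r 1 t| ^ k by ring,
      show 2 * c * h ^ (r * (k:ℝ) + 1) * ∫ s in Set.Ioi (0:ℝ), |phiPow r 1 s| ^ k
        = (2 * h ^ (r * (k:ℝ) + 1)) *
          (c * ∫ s in Set.Ioi (0:ℝ), |phiPow r 1 s| ^ k) by ring,
      mul_div_mul_left _ _ (by positivity : (2:ℝ) * h ^ (r * (k:ℝ) + 1) ≠ 0)]
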